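/- arXiv:2006.14403 — 6 statements merged into one kernel-verified Lean document; each statement's English description precedes it below -/
import Mathlib

section
/- Let (X,d) be a metric space, C₁, C₂, F₁, F₂ finite subsets of X, B > 0, R* > 0 and k ∈ ℕ. Suppose S₁ ⊆ C₁ is such that every j ∈ C₁ is within distance 2R* of some point of S₁, and similarly every j ∈ C₂ is within distance 2R* of some point of S₂ ⊆ C₂. Suppose A₁ ⊆ F₁ and A₂ ⊆ F₂ are multisets with |A₁| = |A₂| = k, there is a bijection M : A₁ → A₂ with d(a, M(a)) ≤ B for all a ∈ A₁, and there are injective maps φ_t : S_t → A_t with d(j, φ_t(j)) ≤ R* for t = 1,2. Then (A₁, A₂) is a feasible solution of the Dynamic k-Supplier instance (C₁,C₂,F₁,F₂,B,k) with T = 2 time steps, and its covering radius satisfies max_{t∈{1,2}} max_{j∈C_t} d(j, A_t) ≤ 3R*. -/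
/-- Dynamic k-Supplier, T = 2: if `S₁`, `S₂` are `2R*`-nets of the client sets
`C₁`, `C₂`, the multisets `A₁ ⊆ F₁`, `A₂ ⊆ F₂` (of size `k`, represented as
functions `Fin k → X`) admit a perfect matching moving each facility at most `B`,
and each net point has its own facility within `R*`, then `(A₁, A₂)` is a feasible
solution of the Dynamic k-Supplier instance and its covering radius is at most `3R*`. -/
theorem stmt1 {X : Type*} [MetricSpace X]
    (C₁ C₂ F₁ F₂ : Finset X) (B Rstar : ℝ) (hB : 0 < B) (hR : 0 < Rstar) (k : ℕ)
    (S₁ S₂ : Finset X) (hS₁ : S₁ ⊆ C₁) (hS₂ : S₂ ⊆ C₂)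
    (hnet₁ : ∀ j ∈ C₁, ∃ s ∈ S₁, dist j s ≤ 2 * Rstar)
    (hnet₂ : ∀ j ∈ C₂, ∃ s ∈ S₂, dist j s ≤ 2 * Rstar)
    (A₁ A₂ : Fin k → X)
    (hA₁ : ∀ i, A₁ i ∈ F₁) (hA₂ : ∀ i, A₂ i ∈ F₂)
    (M : Equiv.Perm (Fin k)) (hM : ∀ i, dist (A₁ i) (A₂ (M i)) ≤ B)
    (φ₁ : {j // j ∈ S₁} → Fin k) (hφ₁inj : Function.Injective φ₁)
    (hφ₁ : ∀ j : {j // j ∈ S₁}, dist (j : X) (A₁ (φ₁ j)) ≤ Rstar)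
    (φ₂ : {j // j ∈ S₂} → Fin k) (hφ₂inj : Function.Injective φ₂)
    (hφ₂ : ∀ j : {j // j ∈ S₂}, dist (j : X) (A₂ (φ₂ j)) ≤ Rstar) :
    ((∀ i, A₁ i ∈ F₁) ∧ (∀ i, A₂ i ∈ F₂) ∧
      ∃ σ : Equiv.Perm (Fin k), ∀ i, dist (A₁ i) (A₂ (σ i)) ≤ B) ∧
    (∀ j ∈ C₁, ∃ i : Fin k, dist j (A₁ i) ≤ 3 * Rstar) ∧
    (∀ j ∈ C₂, ∃ i : Fin k, dist j (A₂ i) ≤ 3 * Rstar) := by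
  refine ⟨⟨hA₁, hA₂, ⟨M, hM⟩⟩, ?_, ?_⟩
  · intro j hj
    obtain ⟨s, hs, hds⟩ := hnet₁ j hj
    refine ⟨φ₁ ⟨s, hs⟩, ?_⟩
    calc dist j (A₁ (φ₁ ⟨s, hs⟩)) ≤ dist j s + dist s (A₁ (φ₁ ⟨s, hs⟩)) := dist_triangle _ _ _
      _ ≤ 2 * Rstar + Rstar := add_le_add hds (hφ₁ ⟨s, hs⟩)
      _ = 3 * Rstar := by ring
  · intro j hj
    obtain ⟨s, hs, hds⟩ := hnet₂ j hj
    refine ⟨φ₂ ⟨s, hs⟩, ?_⟩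
    calc dist j (A₂ (φ₂ ⟨s, hs⟩)) ≤ dist j s + dist s (A₂ (φ₂ ⟨s, hs⟩)) := dist_triangle _ _ _
      _ ≤ 2 * Rstar + Rstar := add_le_add hds (hφ₂ ⟨s, hs⟩)
      _ = 3 * Rstar := by ring
end

section
/- Let A, B, C be pairwise disjoint finite sets with |A| = |B| = |C| = n, let T ⊆ A×B×C be a nonempty set of triplets such that every element of A ∪ B ∪ C appears in at least one triplet, and let α ≥ 1. Construct the weighted graph G with vertex set {a_g, b_g, c_g : g = (a,b,c) ∈ T}, with an edge of length α between a_g and b_g and between b_g and c_g for each g ∈ T, and an edge of length 1 between every two distinct vertices corresponding to the same element of A (respectively B, C). Let d_G be the shortest-path metric of G, let V_A (resp. V_B, V_C) be the set of vertices corresponding to elements of A (resp. B, C), and consider the Dynamic k-Supplier instance on (V(G), d_G) with T = 3 time steps, k = n, movement bound B = α, client sets C₁ = V_A, C₂ = V_B, C₃ = V_C and facility sets F₁ = V_A, F₂ = V_B, F₃ = V_C. Then this instance admits a feasible solution with covering radius at most 1 if and only if the 3D-matching instance (A,B,C,T) has a perfect 3D matching; moreover, if no perfect 3D matching exists, every feasible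 solution has covering radius at least 2α + 1. -/
open scoped ENNReal

/-- Shortest-path (walk) cost between two vertices of a graph with edge weights
`w : V → V → ℝ≥0∞` (`⊤` encoding the absence of an edge): the infimum over all
finite walks from `u` to `v` of the total weight of the traversed edges. -/
noncomputable def walkCost {V : Type*} (w : V → V → ℝ≥0∞) (u v : V) : ℝ≥0∞ :=
  ⨅ (n : ℕ) (f : Fin (n + 1) → V) (_ : f 0 = u) (_ : f (Fin.last n) = v),
    ∑ i : Fin n, w (f i.castSucc) (f i.succ)

/-- Whether two triplets agree in the coordinate indexed by `i : Fin 3`. -/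
def sameCoord {A B C : Type*} (g g' : A × B × C) (i : Fin 3) : Prop :=
  if i.val = 0 then g.1 = g'.1 else if i.val = 1 then g.2.1 = g'.2.1 else g.2.2 = g'.2.2

open Classical in
/-- The edge weights of the hardness gadget built from a 3D-matching instance
`T ⊆ A × B × C`: the vertex set is `{g // g ∈ T} × Fin 3` (the copies `a_g, b_g,
c_g` of the three coordinates of each triplet `g ∈ T`); for each `g ∈ T` the
vertices `a_g, b_g` and `b_g, c_g` are joined by edges of length `α`, and any two
distinct vertices corresponding to the same element of `A` (resp. `B`, `C`) are
joined by an edge of length `1`; all other weights are `⊤` (no edge). -/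
noncomputable def gadgetWeight {A B C : Type*} (T : Finset (A × B × C)) (α : ℝ≥0∞) :
    ({g // g ∈ T} × Fin 3) → ({g // g ∈ T} × Fin 3) → ℝ≥0∞ := fun p q =>
  if (p.1 : A × B × C) = (q.1 : A × B × C) ∧
      ((p.2.val = 0 ∧ q.2.val = 1) ∨ (p.2.val = 1 ∧ q.2.val = 0) ∨
        (p.2.val = 1 ∧ q.2.val = 2) ∨ (p.2.val = 2 ∧ q.2.val = 1)) then α
  else if (p.1 : A × B × C) ≠ (q.1 : A × B × C) ∧ p.2 = q.2 ∧
      sameCoord (p.1 : A × B × C) (q.1 : A × B × C) p.2 then 1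
  else ⊤

/-- The 3D-matching instance `(A, B, C, T)` has a perfect 3D matching: a subset
`S ⊆ T` with `|S| = n` in which every element of `A`, `B` and `C` appears in
exactly one triplet. -/
def HasPerfect3DM {A B C : Type*} (n : ℕ) (T : Finset (A × B × C)) : Prop :=
  ∃ S ⊆ T, S.card = n ∧
    (∀ a : A, ∃! g, g ∈ S ∧ g.1 = a) ∧
    (∀ b : B, ∃! g, g ∈ S ∧ g.2.1 = b) ∧
    (∀ c : C, ∃! g, g ∈ S ∧ g.2.2 = c)

/-- Feasibility for the Dynamic k-Supplier instance on the gadget with `T = 3`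
time steps, `k = n`, movement bound `B = α`, client and facility sets
`V_A, V_B, V_C` (the vertices of the gadget with second coordinate `0`, `1`, `2`):
the three multisets of facilities (given as functions `Fin n → vertices`) lie in
`V_A`, `V_B`, `V_C` respectively and consecutive ones admit perfect matchings
moving every facility a distance at most `α`. -/
def DKSFeasible {A B C : Type*} (T : Finset (A × B × C)) (α : ℝ≥0∞) (n : ℕ)
    (A₁ A₂ A₃ : Fin n → {g // g ∈ T} × Fin 3) : Prop :=
  (∀ i, (A₁ i).2.val = 0) ∧ (∀ i, (A₂ i).2.val = 1) ∧ (∀ i, (A₃ i).2.val = 2) ∧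
  (∃ σ : Equiv.Perm (Fin n), ∀ i, walkCost (gadgetWeight T α) (A₁ i) (A₂ (σ i)) ≤ α) ∧
  (∃ σ : Equiv.Perm (Fin n), ∀ i, walkCost (gadgetWeight T α) (A₂ i) (A₃ (σ i)) ≤ α)

/-- `(A₁, A₂, A₃)` covers every client of each time step within radius `R` in the
shortest-path metric of the gadget. -/
def CoversWithin {A B C : Type*} (T : Finset (A × B × C)) (α : ℝ≥0∞) (n : ℕ)
    (A₁ A₂ A₃ : Fin n → {g // g ∈ T} × Fin 3) (R : ℝ≥0∞) : Prop :=
  (∀ v : {g // g ∈ T} × Fin 3, v.2.val = 0 →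
    ∃ i, walkCost (gadgetWeight T α) v (A₁ i) ≤ R) ∧
  (∀ v : {g // g ∈ T} × Fin 3, v.2.val = 1 →
    ∃ i, walkCost (gadgetWeight T α) v (A₂ i) ≤ R) ∧
  (∀ v : {g // g ∈ T} × Fin 3, v.2.val = 2 →
    ∃ i, walkCost (gadgetWeight T α) v (A₃ i) ≤ R)

/-!
Distances in the gadget are bounded below by potentials that drop by at most the weight
of each edge. Leaving a triplet costs at least `α + 1` (an `α`-edge and a `1`-edge), so a
facility moving by at most `α` stays on its triplet, and the three facility sets sit on the
same `n` triplets. A client lies within distance `< 2α + 1` of a facility of its layer only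
if both are copies of the same element, so covering radius `< 2α + 1` makes these `n`
triplets hit every element of `A`, `B` and `C`: as `|A| = |B| = |C| = n` they form a perfect
matching. Conversely, a perfect matching placed in all three layers is feasible with radius `1`.
-/

section walkCost

variable {V : Type*} (w : V → V → ℝ≥0∞)

lemma walkCost_le_sum {u v : V} (n : ℕ) (f : Fin (n + 1) → V) (h0 : f 0 = u)
    (hl : f (Fin.last n) = v) :
    walkCost w u v ≤ ∑ i : Fin n, w (f i.castSucc) (f i.succ) :=
  iInf_le_of_le n <| iInf_le_of_le f <| iInf_le_of_le h0 <| iInf_le_of_le hl le_rfl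

@[simp]
lemma walkCost_self (v : V) : walkCost w v v = 0 :=
  nonpos_iff_eq_zero.1 <| by simpa using walkCost_le_sum w 0 (fun _ => v) rfl rfl

lemma walkCost_le_weight (u v : V) : walkCost w u v ≤ w u v := by
  simpa using walkCost_le_sum w 1 ![u, v] rfl rfl

variable {w}

lemma le_sum_add_of_potential {φ : V → ℝ≥0∞} (hφ : ∀ x y, φ x ≤ w x y + φ y) :
    ∀ (n : ℕ) (f : Fin (n + 1) → V),
      φ (f 0) ≤ (∑ i : Fin n, w (f i.castSucc) (f i.succ)) + φ (f (Fin.last n))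
  | 0, f => by simp
  | n + 1, f => calc
      φ (f 0) ≤ w (f 0) (f 1) + φ (f 1) := hφ _ _
      _ ≤ w (f 0) (f 1) +
          ((∑ i : Fin n, w (f i.succ.castSucc) (f i.succ.succ)) + φ (f (Fin.last (n + 1)))) := by
        gcongr
        simpa [Fin.succ_last] using le_sum_add_of_potential hφ n (f ∘ Fin.succ)
      _ = _ := by simp only [Fin.sum_univ_succ, add_assoc]; rfl

lemma le_walkCost_of_potential {φ : V → ℝ≥0∞} (hφ : ∀ x y, φ x ≤ w x y + φ y) {u v : V}
    (hv : φ v = 0) : φ u ≤ walkCost w u v :=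
  le_iInf fun n => le_iInf fun f => le_iInf fun h0 => le_iInf fun hl => by
    subst h0 hl
    simpa [hv] using le_sum_add_of_potential hφ n f

end walkCost

section sameCoord

variable {A B C : Type*}

@[simp] lemma sameCoord_zero {g h : A × B × C} : sameCoord g h 0 ↔ g.1 = h.1 := by
  simp [sameCoord]

@[simp] lemma sameCoord_one {g h : A × B × C} : sameCoord g h 1 ↔ g.2.1 = h.2.1 := by
  simp [sameCoord]

@[simp] lemma sameCoord_two {g h : A × B × C} : sameCoord g h 2 ↔ g.2.2 = h.2.2 := by
  simp [sameCoord]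

lemma sameCoord_refl (g : A × B × C) (i : Fin 3) : sameCoord g g i := by
  fin_cases i <;> simp

lemma sameCoord.congr_left {g g' h : A × B × C} {i : Fin 3} (hgg' : sameCoord g g' i) :
    sameCoord g h i ↔ sameCoord g' h i := by
  fin_cases i <;> simp_all

end sameCoord

section gadget

variable {A B C : Type*} {T : Finset (A × B × C)} {α : ℝ≥0∞}

lemma gadgetWeight_eq_top_or (p q : {g // g ∈ T} × Fin 3) :
    gadgetWeight T α p q = ⊤ ∨ (p.1 = q.1 ∧ gadgetWeight T α p q = α) ∨
      (p.2 = q.2 ∧ sameCoord (p.1 : A × B × C) q.1 p.2 ∧ gadgetWeight T α p q = 1) := by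
  unfold gadgetWeight
  split_ifs with hv hh
  · exact .inr <| .inl ⟨Subtype.ext hv.1, rfl⟩
  · exact .inr <| .inr ⟨hh.2.1, hh.2.2, rfl⟩
  · exact .inl rfl

lemma le_walkCost_gadgetWeight {φ : {g // g ∈ T} × Fin 3 → ℝ≥0∞}
    (hvert : ∀ (g : {g // g ∈ T}) l l', φ (g, l) ≤ α + φ (g, l'))
    (hhor : ∀ (g g' : {g // g ∈ T}) l, sameCoord (g : A × B × C) g' l → φ (g, l) ≤ 1 + φ (g', l))
    {x y : {g // g ∈ T} × Fin 3} (hy : φ y = 0) :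
    φ x ≤ walkCost (gadgetWeight T α) x y := by
  refine le_walkCost_of_potential (fun ⟨g, l⟩ ⟨g', l'⟩ => ?_) hy
  rcases gadgetWeight_eq_top_or (α := α) (g, l) (g', l') with h | ⟨rfl, h⟩ | ⟨rfl, hs, h⟩
  all_goals rw [h]
  · simp
  · exact hvert g l l'
  · exact hhor g g' l hs

lemma add_one_le_walkCost_gadgetWeight {x y : {g // g ∈ T} × Fin 3}
    (hg : x.1 ≠ y.1) (hl : x.2 ≠ y.2) :
    α + 1 ≤ walkCost (gadgetWeight T α) x y := by
  classical
  let φ : {g // g ∈ T} × Fin 3 → ℝ≥0∞ :=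
    fun p => (if p.2 = y.2 then 0 else α) + (if p.1 = y.1 then 0 else 1)
  refine (le_of_eq ?_).trans (le_walkCost_gadgetWeight (φ := φ) ?_ ?_ ?_)
  · simp [φ, hg, hl]
  · intro g l l'
    simp only [φ, ← add_assoc]
    gcongr
    split_ifs <;> simp
  · intro g g' l _
    simp only [φ, add_left_comm (1 : ℝ≥0∞)]
    gcongr
    split_ifs <;> simp
  · simp [φ]

lemma two_mul_add_one_le_walkCost_gadgetWeight {x y : {g // g ∈ T} × Fin 3}
    (hl : x.2 = y.2) (hc : ¬ sameCoord (x.1 : A × B × C) y.1 y.2) :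
    2 * α + 1 ≤ walkCost (gadgetWeight T α) x y := by
  classical
  let P : {g // g ∈ T} → Prop := fun g => sameCoord (g : A × B × C) y.1 y.2
  -- the distance to the copies of `y`'s element in layer `y.2`
  let φ : {g // g ∈ T} × Fin 3 → ℝ≥0∞ := fun p =>
    if P p.1 then (if p.2 = y.2 then 0 else α) else (if p.2 = y.2 then α + (α + 1) else α + 1)
  refine (le_of_eq ?_).trans (le_walkCost_gadgetWeight (φ := φ) ?_ ?_ ?_)
  · simp [φ, P, hc, hl, two_mul, add_assoc]
  · intro g l l'
    simp only [φ]
    split_ifs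
    all_goals first
      | exact zero_le | exact le_self_add | exact le_add_self | exact le_rfl
      | exact le_add_self.trans le_add_self
  · intro g g' l hgg'
    simp only [φ]
    by_cases hly : l = y.2
    · subst hly
      have : P g ↔ P g' := hgg'.congr_left
      split_ifs <;> simp_all
    · split_ifs
      all_goals first
        | exact le_add_self | exact le_self_add.trans le_add_self | exact (add_comm _ _).le
  · simp [φ, P, sameCoord_refl]

end gadget

lemma Finset.existsUnique_mem_image_of_bijective {ι X Y : Type*} [Fintype ι] [DecidableEq X]
    {f : ι → X} {p : X → Y} (hb : (p ∘ f).Bijective) (y : Y) :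
    ∃! x, x ∈ Finset.univ.image f ∧ p x = y := by
  obtain ⟨i, rfl⟩ := hb.2 y
  refine ⟨f i, ⟨Finset.mem_image_of_mem f (Finset.mem_univ i), rfl⟩, ?_⟩
  rintro _ ⟨hx, hpx⟩
  obtain ⟨j, -, rfl⟩ := Finset.mem_image.1 hx
  exact congrArg f (hb.1 hpx)

section matching

variable {A B C : Type*} [Fintype A] [Fintype B] [Fintype C] {T : Finset (A × B × C)} {n : ℕ}

lemma hasPerfect3DM_of_surjective (hA : Fintype.card A = n) (hB : Fintype.card B = n)
    (hC : Fintype.card C = n) {f : Fin n → A × B × C} (hfT : ∀ i, f i ∈ T)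
    (ha : (fun i => (f i).1).Surjective) (hb : (fun i => (f i).2.1).Surjective)
    (hc : (fun i => (f i).2.2).Surjective) : HasPerfect3DM n T := by
  classical
  have haf : (Prod.fst ∘ f).Bijective :=
    (Fintype.bijective_iff_surjective_and_card _).2 ⟨ha, by simp [hA]⟩
  have hbf : ((·.2.1) ∘ f).Bijective :=
    (Fintype.bijective_iff_surjective_and_card _).2 ⟨hb, by simp [hB]⟩
  have hcf : ((·.2.2) ∘ f).Bijective :=
    (Fintype.bijective_iff_surjective_and_card _).2 ⟨hc, by simp [hC]⟩
  refine ⟨Finset.univ.image f, ?_, ?_, Finset.existsUnique_mem_image_of_bijective haf,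
    Finset.existsUnique_mem_image_of_bijective hbf, Finset.existsUnique_mem_image_of_bijective hcf⟩
  · simpa [Finset.image_subset_iff] using hfT
  · rw [Finset.card_image_of_injective _ fun i j h => haf.1 (congrArg Prod.fst h)]
    simp

end matching

section reduction

variable {A B C : Type*} {T : Finset (A × B × C)} {α : ℝ≥0∞} {n : ℕ}

lemma val_eq_of_walkCost_le (hα : α ≠ ⊤) {x y : {g // g ∈ T} × Fin 3} (hl : x.2 ≠ y.2)
    (h : walkCost (gadgetWeight T α) x y ≤ α) : x.1 = y.1 := by
  by_contra hg
  exact (ENNReal.lt_add_right hα one_ne_zero).not_ge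
    ((add_one_le_walkCost_gadgetWeight hg hl).trans h)

lemma exists_sameCoord_of_walkCost_lt {l : Fin 3} (F : Fin n → {g // g ∈ T} × Fin 3)
    (hF : ∀ i, (F i).2 = l)
    (hcov : ∀ v : {g // g ∈ T} × Fin 3, v.2 = l →
      ∃ i, walkCost (gadgetWeight T α) v (F i) < 2 * α + 1)
    {g : A × B × C} (hg : g ∈ T) : ∃ i, sameCoord g (F i).1 l := by
  obtain ⟨i, hi⟩ := hcov (⟨g, hg⟩, l) rfl
  refine ⟨i, by_contra fun hc => hi.not_ge ?_⟩
  exact two_mul_add_one_le_walkCost_gadgetWeight (hF i).symm (by rwa [hF i])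

lemma walkCost_le_one_of_sameCoord {x y : {g // g ∈ T}} {l : Fin 3}
    (h : sameCoord (x : A × B × C) y l) : walkCost (gadgetWeight T α) (x, l) (y, l) ≤ 1 := by
  classical
  rcases eq_or_ne x y with rfl | hne
  · simp
  · refine (walkCost_le_weight _ _ _).trans (le_of_eq ?_)
    have hne' : (x : A × B × C) ≠ y := Subtype.coe_injective.ne hne
    simp [gadgetWeight, hne', h]

lemma exists_dksFeasible_coversWithin_one (h : HasPerfect3DM n T) :
    ∃ A₁ A₂ A₃ : Fin n → {g // g ∈ T} × Fin 3,
      DKSFeasible T α n A₁ A₂ A₃ ∧ CoversWithin T α n A₁ A₂ A₃ 1 := by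
  obtain ⟨S, hST, hcard, ha, hb, hc⟩ := h
  let e : {g // g ∈ S} ≃ Fin n := S.equivFinOfCardEq hcard
  let m : Fin n → {g // g ∈ T} := fun i => ⟨e.symm i, hST (e.symm i).2⟩
  have covers (v : {g // g ∈ T} × Fin 3) {l : Fin 3} (hl : v.2.val = l.val) {g : A × B × C}
      (hg : g ∈ S) (hvg : sameCoord (v.1 : A × B × C) g l) :
      ∃ i, walkCost (gadgetWeight T α) v (m i, l) ≤ 1 := by
    refine ⟨e ⟨g, hg⟩, ?_⟩
    rw [show v = (v.1, l) from Prod.ext rfl (Fin.ext hl)]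
    exact walkCost_le_one_of_sameCoord (by simpa [m] using hvg)
  have vertical {l l' : Fin 3} (hll' : l.val = 0 ∧ l'.val = 1 ∨ l.val = 1 ∧ l'.val = 2)
      (i : Fin n) : walkCost (gadgetWeight T α) (m i, l) (m i, l') ≤ α :=
    (walkCost_le_weight _ _ _).trans (by rw [gadgetWeight, if_pos ⟨rfl, by dsimp only; omega⟩])
  refine ⟨fun i => (m i, 0), fun i => (m i, 1), fun i => (m i, 2),
    ⟨fun _ => rfl, fun _ => rfl, fun _ => rfl, ⟨1, vertical (by simp)⟩, ⟨1, vertical (by simp)⟩⟩,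
    fun v hv => ?_, fun v hv => ?_, fun v hv => ?_⟩
  · obtain ⟨g, ⟨hg, hga⟩, -⟩ := ha (v.1 : A × B × C).1
    exact covers v hv hg (by simp [hga])
  · obtain ⟨g, ⟨hg, hgb⟩, -⟩ := hb (v.1 : A × B × C).2.1
    exact covers v hv hg (by simp [hgb])
  · obtain ⟨g, ⟨hg, hgc⟩, -⟩ := hc (v.1 : A × B × C).2.2
    exact covers v hv hg (by simp [hgc])

variable [Fintype A] [Fintype B] [Fintype C]

lemma hasPerfect3DM_of_dksFeasible (hA : Fintype.card A = n) (hB : Fintype.card B = n)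
    (hC : Fintype.card C = n) (hcovA : ∀ a : A, ∃ g ∈ T, g.1 = a)
    (hcovB : ∀ b : B, ∃ g ∈ T, g.2.1 = b) (hcovC : ∀ c : C, ∃ g ∈ T, g.2.2 = c)
    (hα : α ≠ ⊤) ⦃A₁ A₂ A₃ : Fin n → {g // g ∈ T} × Fin 3⦄
    (hfeas : DKSFeasible T α n A₁ A₂ A₃)
    (h₁ : ∀ v : {g // g ∈ T} × Fin 3, v.2.val = 0 →
      ∃ i, walkCost (gadgetWeight T α) v (A₁ i) < 2 * α + 1)
    (h₂ : ∀ v : {g // g ∈ T} × Fin 3, v.2.val = 1 →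
      ∃ i, walkCost (gadgetWeight T α) v (A₂ i) < 2 * α + 1)
    (h₃ : ∀ v : {g // g ∈ T} × Fin 3, v.2.val = 2 →
      ∃ i, walkCost (gadgetWeight T α) v (A₃ i) < 2 * α + 1) :
    HasPerfect3DM n T := by
  obtain ⟨hL₁, hL₂, hL₃, ⟨σ, hσ⟩, ⟨τ, hτ⟩⟩ := hfeas
  have h₁₂ : ∀ i, (A₂ (σ i)).1 = (A₁ i).1 := fun i =>
    (val_eq_of_walkCost_le hα (by simp [Fin.ext_iff, hL₁, hL₂]) (hσ i)).symm
  have h₂₃ : ∀ i, (A₃ (τ i)).1 = (A₂ i).1 := fun i =>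
    (val_eq_of_walkCost_le hα (by simp [Fin.ext_iff, hL₂, hL₃]) (hτ i)).symm
  refine hasPerfect3DM_of_surjective hA hB hC (f := fun i => (A₁ i).1) (fun i => (A₁ i).1.2)
    (fun a => ?_) (fun b => ?_) (fun c => ?_)
  · obtain ⟨g, hg, rfl⟩ := hcovA a
    obtain ⟨i, hi⟩ := exists_sameCoord_of_walkCost_lt (l := 0) A₁ (fun i => Fin.ext (hL₁ i))
      (fun v hv => h₁ v (by simp [hv])) hg
    exact ⟨i, (sameCoord_zero.1 hi).symm⟩
  · obtain ⟨g, hg, rfl⟩ := hcovB b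
    obtain ⟨j, hj⟩ := exists_sameCoord_of_walkCost_lt (l := 1) A₂ (fun i => Fin.ext (hL₂ i))
      (fun v hv => h₂ v (by simp [hv])) hg
    exact ⟨σ.symm j, by simpa [← h₁₂] using (sameCoord_one.1 hj).symm⟩
  · obtain ⟨g, hg, rfl⟩ := hcovC c
    obtain ⟨j, hj⟩ := exists_sameCoord_of_walkCost_lt (l := 2) A₃ (fun i => Fin.ext (hL₃ i))
      (fun v hv => h₃ v (by simp [hv])) hg
    exact ⟨σ.symm (τ.symm j), by simpa [← h₁₂, ← h₂₃] using (sameCoord_two.1 hj).symm⟩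

end reduction

theorem stmt2_general {A B C : Type*} [Fintype A] [Fintype B] [Fintype C]
    (n : ℕ) (hA : Fintype.card A = n) (hB : Fintype.card B = n) (hC : Fintype.card C = n)
    (T : Finset (A × B × C))
    (hcovA : ∀ a : A, ∃ g ∈ T, g.1 = a)
    (hcovB : ∀ b : B, ∃ g ∈ T, g.2.1 = b)
    (hcovC : ∀ c : C, ∃ g ∈ T, g.2.2 = c)
    (α : ℝ≥0∞) (hα : 1 ≤ α) (hαtop : α ≠ ⊤) :
    ((∃ A₁ A₂ A₃ : Fin n → {g // g ∈ T} × Fin 3,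
        DKSFeasible T α n A₁ A₂ A₃ ∧ CoversWithin T α n A₁ A₂ A₃ 1) ↔
      HasPerfect3DM n T) ∧
    (¬ HasPerfect3DM n T →
      ∀ A₁ A₂ A₃ : Fin n → {g // g ∈ T} × Fin 3, DKSFeasible T α n A₁ A₂ A₃ →
        ∃ v : {g // g ∈ T} × Fin 3,
          (v.2.val = 0 ∧ ∀ i, 2 * α + 1 ≤ walkCost (gadgetWeight T α) v (A₁ i)) ∨
          (v.2.val = 1 ∧ ∀ i, 2 * α + 1 ≤ walkCost (gadgetWeight T α) v (A₂ i)) ∨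
          (v.2.val = 2 ∧ ∀ i, 2 * α + 1 ≤ walkCost (gadgetWeight T α) v (A₃ i))) := by
  have one_lt : (1 : ℝ≥0∞) < 2 * α + 1 := by
    rw [add_comm]
    exact ENNReal.lt_add_right ENNReal.one_ne_top (mul_ne_zero two_ne_zero (one_pos.trans_le hα).ne')
  have of_feasible := hasPerfect3DM_of_dksFeasible hA hB hC hcovA hcovB hcovC hαtop
  refine ⟨⟨fun ⟨A₁, A₂, A₃, hfeas, h₁, h₂, h₃⟩ => ?_, exists_dksFeasible_coversWithin_one⟩,
    fun hno A₁ A₂ A₃ hfeas => ?_⟩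
  · exact of_feasible hfeas (fun v hv => (h₁ v hv).imp fun _ h => h.trans_lt one_lt)
      (fun v hv => (h₂ v hv).imp fun _ h => h.trans_lt one_lt)
      (fun v hv => (h₃ v hv).imp fun _ h => h.trans_lt one_lt)
  · by_contra! hfar
    exact hno (of_feasible hfeas (fun v => (hfar v).1) (fun v => (hfar v).2.1)
      (fun v => (hfar v).2.2))

/-- Correctness of the 3D-matching hardness gadget for Dynamic k-Supplier with
`T = 3` time steps: the instance admits a feasible solution with covering radius
at most `1` iff the 3D-matching instance has a perfect 3D matching; moreover, if
no perfect 3D matching exists, then every feasible solution has covering radius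
at least `2α + 1` (some client is at distance at least `2α + 1` from all the
facilities of its time step). -/
theorem stmt2 {A B C : Type*} [Fintype A] [Fintype B] [Fintype C]
    (n : ℕ) (hA : Fintype.card A = n) (hB : Fintype.card B = n) (hC : Fintype.card C = n)
    (T : Finset (A × B × C)) (hT : T.Nonempty)
    (hcovA : ∀ a : A, ∃ g ∈ T, g.1 = a)
    (hcovB : ∀ b : B, ∃ g ∈ T, g.2.1 = b)
    (hcovC : ∀ c : C, ∃ g ∈ T, g.2.2 = c)
    (α : ℝ≥0∞) (hα : 1 ≤ α) (hαtop : α ≠ ⊤) :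
    ((∃ A₁ A₂ A₃ : Fin n → {g // g ∈ T} × Fin 3,
        DKSFeasible T α n A₁ A₂ A₃ ∧ CoversWithin T α n A₁ A₂ A₃ 1) ↔
      HasPerfect3DM n T) ∧
    (¬ HasPerfect3DM n T →
      ∀ A₁ A₂ A₃ : Fin n → {g // g ∈ T} × Fin 3, DKSFeasible T α n A₁ A₂ A₃ →
        ∃ v : {g // g ∈ T} × Fin 3,
          (v.2.val = 0 ∧ ∀ i, 2 * α + 1 ≤ walkCost (gadgetWeight T α) v (A₁ i)) ∨
          (v.2.val = 1 ∧ ∀ i, 2 * α + 1 ≤ walkCost (gadgetWeight T α) v (A₂ i)) ∨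
          (v.2.val = 2 ∧ ∀ i, 2 * α + 1 ≤ walkCost (gadgetWeight T α) v (A₃ i))) :=
  stmt2_general n hA hB hC T hcovA hcovB hcovC α hα hαtop
end

section
/- Let (X,d) be a metric space, F ⊆ X a finite set of facility locations with values y : F → [0,1], and C' a finite set of clients with |C'| ≥ 2. For each j ∈ C' let x^j : F → [0,1] satisfy Σ_{i∈F} x^j_i = 1 and x^j_i ∈ {0, y_i} for every i, and set d_av(j) = Σ_{i∈F} x^j_i · d(i,j). Assume that for all distinct j, j' ∈ C' one has d(j,j') > 0 and d(j,j') ≥ 4·max{d_av(j), d_av(j')}. For j ∈ C' define R_j = (1/2)·min_{j'∈C', j'≠j} d(j,j') and the bundle U_j = {i ∈ F : x^j_i > 0 and d(i,j) < R_j}. Then for every j ∈ C' one has 1/2 ≤ Σ_{i∈U_j} y_i ≤ 1, and for all distinct j, j' ∈ C' the bundles U_j and U_{j'} are disjoint; in fact every i ∈ U_j and i' ∈ U_{j'} satisfy d(i,i') > 0. -/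
/-!
Since `2 d_av(j) ≤ R_j`, Markov's inequality for the distribution `x^j` puts mass at least `1/2`
in the open ball of radius `R_j` about `j`, and on that ball the positive weights of `x^j` are
exactly the `y_i`. The radii of two clients add up to at most their distance, so their bundles
lie in disjoint open balls.
-/

open Finset Metric

theorem sum_filter_le_mul_le_sum_mul {ι R : Type*} [Semiring R] [LinearOrder R] [IsOrderedRing R]
    (s : Finset ι) {w f : ι → R} (hw : ∀ i ∈ s, 0 ≤ w i) (hf : ∀ i ∈ s, 0 ≤ f i) (r : R) :
    (∑ i ∈ s with r ≤ f i, w i) * r ≤ ∑ i ∈ s, w i * f i := by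
  rw [sum_mul]
  calc ∑ i ∈ s with r ≤ f i, w i * r
      ≤ ∑ i ∈ s with r ≤ f i, w i * f i := by
        refine sum_le_sum fun i hi => ?_
        rw [mem_filter] at hi
        exact mul_le_mul_of_nonneg_left hi.2 (hw i hi.1)
    _ ≤ ∑ i ∈ s, w i * f i :=
        sum_le_sum_of_subset_of_nonneg (filter_subset _ _)
          fun i hi _ => mul_nonneg (hw i hi) (hf i hi)

theorem half_le_sum_filter_lt {ι R : Type*} [Field R] [LinearOrder R] [IsStrictOrderedRing R]
    (s : Finset ι) {w f : ι → R} (hw : ∀ i ∈ s, 0 ≤ w i) (hf : ∀ i ∈ s, 0 ≤ f i)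
    (hw1 : ∑ i ∈ s, w i = 1) {r : R} (hr : 0 < r) (hwf : 2 * ∑ i ∈ s, w i * f i ≤ r) :
    1 / 2 ≤ ∑ i ∈ s with f i < r, w i := by
  have hsplit := sum_filter_add_sum_filter_not s (fun i => f i < r) w
  simp only [not_lt] at hsplit
  have hfar : ∑ i ∈ s with r ≤ f i, w i ≤ 1 / 2 := by
    refine le_of_mul_le_mul_right ?_ hr
    linarith [sum_filter_le_mul_le_sum_mul s hw hf r]
  linarith

theorem sum_filter_pos_and_eq_sum_filter {ι R : Type*} [AddCommMonoid R] [LinearOrder R]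
    (s : Finset ι) {x y : ι → R} (p : ι → Prop) [DecidablePred p]
    (hxy : ∀ i ∈ s, x i = 0 ∨ x i = y i) (hy : ∀ i ∈ s, 0 ≤ y i) :
    ∑ i ∈ s with 0 < x i ∧ p i, y i = ∑ i ∈ s with p i, x i := by
  rw [sum_filter, sum_filter]
  refine sum_congr rfl fun i hi => ?_
  rcases hxy i hi with hx | hx
  · simp [hx]
  · rcases (hy i hi).eq_or_lt with hy0 | hy0
    · simp [hx, ← hy0]
    · simp [hx, hy0]

open Classical in
theorem stmt3_general {X : Type*} [MetricSpace X] (F : Finset X) (y : X → ℝ)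
    (hy0 : ∀ i ∈ F, 0 ≤ y i)
    (C' : Finset X)
    (x : X → X → ℝ)
    (hxsum : ∀ j ∈ C', ∑ i ∈ F, x j i = 1)
    (hx01 : ∀ j ∈ C', ∀ i ∈ F, x j i = 0 ∨ x j i = y i)
    (dav : X → ℝ) (hdav : ∀ j ∈ C', dav j = ∑ i ∈ F, x j i * dist i j)
    (hsep : ∀ j ∈ C', ∀ j' ∈ C', j ≠ j' →
      0 < dist j j' ∧ 4 * max (dav j) (dav j') ≤ dist j j')
    (Rf : X → ℝ)
    (hRf : ∀ j ∈ C',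
      (∀ j' ∈ C', j' ≠ j → Rf j ≤ (1 / 2) * dist j j') ∧
      ∃ j' ∈ C', j' ≠ j ∧ Rf j = (1 / 2) * dist j j')
    (U : X → Finset X)
    (hU : ∀ j ∈ C', U j = F.filter fun i => 0 < x j i ∧ dist i j < Rf j) :
    (∀ j ∈ C', 1 / 2 ≤ ∑ i ∈ U j, y i ∧ ∑ i ∈ U j, y i ≤ 1) ∧
    (∀ j ∈ C', ∀ j' ∈ C', j ≠ j' →
      Disjoint (U j) (U j') ∧ ∀ i ∈ U j, ∀ i' ∈ U j', 0 < dist i i') := by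
  have hx0 : ∀ j ∈ C', ∀ i ∈ F, 0 ≤ x j i := fun j hj i hi => by
    rcases hx01 j hj i hi with h | h <;> simp [h, hy0 i hi]
  have hR : ∀ j ∈ C', 0 < Rf j ∧ 2 * dav j ≤ Rf j := fun j hj => by
    obtain ⟨-, j', hj', hne, hRj⟩ := hRf j hj
    obtain ⟨hpos, hfar⟩ := hsep j hj j' hj' hne.symm
    have := le_max_left (dav j) (dav j')
    constructor <;> linarith
  have hsumU : ∀ j ∈ C', ∑ i ∈ U j, y i = ∑ i ∈ F with dist i j < Rf j, x j i := fun j hj => by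
    rw [hU j hj]
    exact sum_filter_pos_and_eq_sum_filter F _ (hx01 j hj) hy0
  have hball : ∀ j ∈ C', ∀ i ∈ U j, i ∈ ball j (Rf j) := fun j hj i hi => by
    rw [hU j hj, mem_filter] at hi
    exact hi.2.2
  refine ⟨fun j hj => ⟨?_, ?_⟩, fun j hj j' hj' hne => ?_⟩
  · rw [hsumU j hj]
    exact half_le_sum_filter_lt F (hx0 j hj) (fun i _ => dist_nonneg) (hxsum j hj) (hR j hj).1
      (hdav j hj ▸ (hR j hj).2)
  · rw [hsumU j hj, ← hxsum j hj]
    exact sum_le_sum_of_subset_of_nonneg (filter_subset _ _) fun i hi _ => hx0 j hj i hi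
  · have hdisj : Disjoint (ball j (Rf j)) (ball j' (Rf j')) := by
      refine ball_disjoint_ball ?_
      linarith [(hRf j hj).1 j' hj' hne.symm, (hRf j' hj').1 j hj hne, dist_comm j j']
    have hpos : ∀ i ∈ U j, ∀ i' ∈ U j', 0 < dist i i' := fun i hi i' hi' =>
      dist_pos.mpr (hdisj.ne_of_mem (hball j hj i hi) (hball j' hj' i' hi'))
    exact ⟨disjoint_left.mpr fun i hi hi' => (hpos i hi i hi').ne' (dist_self i), hpos⟩

open Classical in
/-- The lemma on filtered clients and bundles: if the clients of `C'` are
well-separated (`d(j,j') ≥ 4 max{d_av(j), d_av(j')}` and `d(j,j') > 0`), the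
assignments satisfy `x^j_i ∈ {0, y_i}` and sum to `1`, `R_j` is half the distance
to the nearest other filtered client, and `U_j = {i ∈ F : x^j_i > 0, d(i,j) < R_j}`,
then `1/2 ≤ y(U_j) ≤ 1` for all `j ∈ C'`, and the bundles of distinct filtered
clients are disjoint — in fact at pairwise positive distances. -/
theorem stmt3 {X : Type*} [MetricSpace X] (F : Finset X) (y : X → ℝ)
    (hy0 : ∀ i ∈ F, 0 ≤ y i) (hy1 : ∀ i ∈ F, y i ≤ 1)
    (C' : Finset X) (hC' : 2 ≤ C'.card)
    (x : X → X → ℝ)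
    (hxsum : ∀ j ∈ C', ∑ i ∈ F, x j i = 1)
    (hx01 : ∀ j ∈ C', ∀ i ∈ F, x j i = 0 ∨ x j i = y i)
    (dav : X → ℝ) (hdav : ∀ j ∈ C', dav j = ∑ i ∈ F, x j i * dist i j)
    (hsep : ∀ j ∈ C', ∀ j' ∈ C', j ≠ j' →
      0 < dist j j' ∧ 4 * max (dav j) (dav j') ≤ dist j j')
    (Rf : X → ℝ)
    (hRf : ∀ j ∈ C',
      (∀ j' ∈ C', j' ≠ j → Rf j ≤ (1 / 2) * dist j j') ∧
      ∃ j' ∈ C', j' ≠ j ∧ Rf j = (1 / 2) * dist j j')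
    (U : X → Finset X)
    (hU : ∀ j ∈ C', U j = F.filter fun i => 0 < x j i ∧ dist i j < Rf j) :
    (∀ j ∈ C', 1 / 2 ≤ ∑ i ∈ U j, y i ∧ ∑ i ∈ U j, y i ≤ 1) ∧
    (∀ j ∈ C', ∀ j' ∈ C', j ≠ j' →
      Disjoint (U j) (U j') ∧ ∀ i ∈ U j, ∀ i' ∈ U j', 0 < dist i i') :=
  stmt3_general F y hy0 C' x hxsum hx01 dav hdav hsep Rf hRf U hU
end

section
/- Let (X,d) be a metric space, C ⊆ X a finite set, and a : C → ℝ_{≥0}. Then there exists a subset C' ⊆ C such that: (i) for all distinct j, j' ∈ C', d(j,j') ≥ 4·max{a(j), a(j')}; and (ii) for every j'' ∈ C \ C' there exists j''' ∈ C' with a(j''') ≤ a(j'') and d(j'', j''') ≤ 4·a(j''). -/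
/-- Correctness of the filtering procedure: every finite client set `C` with
nonnegative values `a` admits a well-separated subset `C'` (pairwise distances at
least `4·max{a(j), a(j')}`) such that every discarded client `j''` has a filtered
client `j'''` with `a(j''') ≤ a(j'')` and `d(j'', j''') ≤ 4·a(j'')`. -/
theorem stmt4 {X : Type*} [MetricSpace X] [DecidableEq X] (C : Finset X) (a : X → ℝ)
    (ha : ∀ j ∈ C, 0 ≤ a j) :
    ∃ C' ⊆ C,
      (∀ j ∈ C', ∀ j' ∈ C', j ≠ j' → 4 * max (a j) (a j') ≤ dist j j') ∧
      (∀ j'' ∈ C \ C', ∃ j''' ∈ C', a j''' ≤ a j'' ∧ dist j'' j''' ≤ 4 * a j'') := by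
  classical
  induction C using Finset.strongInduction with
  | _ C ih =>
    by_cases hC : C.Nonempty
    · obtain ⟨j, hjC, hjmin⟩ := Finset.exists_min_image C a hC
      set C₂ : Finset X := (C.erase j).filter (fun x => 4 * a x ≤ dist x j) with hC₂
      have hC₂sub : C₂ ⊆ C := fun x hx =>
        Finset.erase_subset _ _ (Finset.mem_filter.mp hx).1
      have hssub : C₂ ⊂ C := Finset.ssubset_iff_of_subset hC₂sub |>.mpr
        ⟨j, hjC, fun hj => (Finset.notMem_erase j C) (Finset.mem_filter.mp hj).1⟩
      obtain ⟨C'', hC''sub, hsep, hcov⟩ := ih C₂ hssub (fun x hx => ha x (hC₂sub hx))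
      refine ⟨insert j C'', ?_, ?_, ?_⟩
      · exact Finset.insert_subset hjC (hC''sub.trans hC₂sub)
      · intro x hx y hy hxy
        rcases Finset.mem_insert.mp hx with hxj | hxC
        · rcases Finset.mem_insert.mp hy with hyj | hyC
          · exact absurd (hxj.trans hyj.symm) hxy
          · have hy₂ := hC''sub hyC
            have h1 : 4 * a y ≤ dist y j := (Finset.mem_filter.mp hy₂).2
            have hmax : max (a x) (a y) = a y := by
              rw [hxj]; exact max_eq_right (hjmin y (hC₂sub hy₂))
            rw [hmax, hxj, dist_comm]; exact h1
        · rcases Finset.mem_insert.mp hy with hyj | hyC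
          · have hx₂ := hC''sub hxC
            have h1 : 4 * a x ≤ dist x j := (Finset.mem_filter.mp hx₂).2
            have hmax : max (a x) (a y) = a x := by
              rw [hyj]; exact max_eq_left (hjmin x (hC₂sub hx₂))
            rw [hmax, hyj]; exact h1
          · exact hsep x hxC y hyC hxy
      · intro j'' hj''
        obtain ⟨hj''C, hj''n⟩ := Finset.mem_sdiff.mp hj''
        have hne : j'' ≠ j := fun h => hj''n (Finset.mem_insert.mpr (Or.inl h))
        have hnC'' : j'' ∉ C'' := fun h => hj''n (Finset.mem_insert.mpr (Or.inr h))
        by_cases h2 : j'' ∈ C₂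
        · obtain ⟨j''', hj''', h3, h4⟩ := hcov j'' (Finset.mem_sdiff.mpr ⟨h2, hnC''⟩)
          exact ⟨j''', Finset.mem_insert.mpr (Or.inr hj'''), h3, h4⟩
        · have hmem : j'' ∈ C.erase j := Finset.mem_erase.mpr ⟨hne, hj''C⟩
          have hd : ¬ (4 * a j'' ≤ dist j'' j) := fun h =>
            h2 (Finset.mem_filter.mpr ⟨hmem, h⟩)
          exact ⟨j, Finset.mem_insert_self j C'', hjmin j'' hj''C, (not_le.mp hd).le⟩
    · refine ⟨∅, Finset.empty_subset _, by simp, ?_⟩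
      intro j'' hj''
      exact absurd ⟨j'', (Finset.mem_sdiff.mp hj'').1⟩ hC
end

section
/- Let n ∈ ℕ and let w ∈ ℝ^n_{≥0} be a non-increasing weight vector whose distinct values are w̄_1 > w̄_2 > … > w̄_N; set w̄_{N+1} = 0, and for r = 1,…,N let I_r be the largest index s with w_s = w̄_r (and I_0 = 0). Let v ∈ ℝ^n_{≥0} be non-increasing and set T_r = v_{I_r} for r = 1,…,N. Then w · v ≥ Σ_{r=1}^{N} (w̄_r − w̄_{r+1}) · I_r · T_r. -/
/-!
Abel summation: each weight telescopes as `w s = ∑_{r : s ≤ I r} (w̄_r - w̄_{r+1})`, because the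
indices `r` with `s ≤ I r` are exactly those with `w̄_r ≤ w s`. Exchanging the order of summation
gives `w · v = ∑_r (w̄_r - w̄_{r+1}) ∑_{s ≤ I r} v s`, and since `v` is non-increasing the inner sum
is at least `(I r + 1) · v (I r)`, while the coefficients `w̄_r - w̄_{r+1}` are nonnegative.
-/

open Finset

theorem Fin.sum_Ici_castSucc_sub_succ {M : Type*} [AddCommGroup M] {N : ℕ}
    (f : Fin (N + 1) → M) (a : Fin N) :
    ∑ r ∈ Ici a, (f r.castSucc - f r.succ) = f a.castSucc - f (last N) := by
  have hIci : Ici a.succ = Ioi a.castSucc := by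
    ext r
    simp only [mem_Ici, mem_Ioi, Fin.le_iff_val_le_val, Fin.lt_def, Fin.val_succ,
      Fin.val_castSucc]
    omega
  have hmap : ∑ r ∈ Ici a, f r.castSucc = ∑ r ∈ Ico a.castSucc (last N), f r := by
    rw [← Fin.map_castSuccEmb_Ici, sum_map]
    rfl
  rw [sum_sub_distrib, ← Fin.sum_Ici_succ, hIci, hmap, sub_eq_sub_iff_add_eq_add,
    sum_Ico_add_eq_sum_Icc (Fin.le_last _),
    show Icc a.castSucc (last N) = Ici a.castSucc from Icc_top,
    add_sum_Ioi_eq_sum_Ici]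

theorem Antitone.natCast_add_one_mul_le_sum_Iic {R : Type*} [Semiring R] [PartialOrder R]
    [IsOrderedAddMonoid R] {n : ℕ} {v : Fin n → R} (hv : Antitone v) (k : Fin n) :
    ((k : ℕ) + 1 : R) * v k ≤ ∑ s ∈ Iic k, v s := by
  have := card_nsmul_le_sum (Iic k) v (v k) fun s hs => hv (mem_Iic.1 hs)
  rwa [Fin.card_Iic, nsmul_eq_mul, Nat.cast_add_one] at this

theorem Finset.sum_mul_sum_Iic {R ι κ : Type*} [NonUnitalNonAssocSemiring R] [Fintype ι]
    [Fintype κ] [Preorder κ] [DecidableLE κ] [LocallyFiniteOrderBot κ]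
    (c : ι → R) (I : ι → κ) (v : κ → R) :
    ∑ r, c r * ∑ s ∈ Iic (I r), v s = ∑ s, (∑ r with s ≤ I r, c r) * v s := by
  simp_rw [mul_sum, sum_mul]
  exact sum_comm' fun r s => by simp

theorem le_iff_le_of_isGreatest_fiber {α β ι : Type*} [LinearOrder α] [PartialOrder β]
    [LinearOrder ι] {w : α → β} (hw : Antitone w) {u : ι → β} (hu : StrictAnti u) {I : ι → α}
    (hI : ∀ r, IsGreatest {s | w s = u r} (I r)) {s : α} {r₀ : ι} (hs : w s = u r₀) (r : ι) :
    s ≤ I r ↔ r₀ ≤ r := by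
  constructor
  · intro h
    rw [← hu.le_iff_ge, ← hs, ← (hI r).1]
    exact hw h
  · intro h
    by_contra! hlt
    have : w s = u r := le_antisymm (by rw [← (hI r).1]; exact hw hlt.le)
      (by rw [hs]; exact hu.antitone h)
    exact hlt.not_ge ((hI r).2 this)

theorem stmt8_general (n N : ℕ) (w : Fin n → ℝ)
    (hwmono : Antitone w)
    (wbar : Fin (N + 1) → ℝ) (hbar : StrictAnti wbar) (hlast : wbar (Fin.last N) = 0)
    (hvals : ∀ s : Fin n, ∃ r : Fin N, w s = wbar r.castSucc)
    (I : Fin N → Fin n)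
    (hI : ∀ r : Fin N, w (I r) = wbar r.castSucc ∧
      ∀ s : Fin n, w s = wbar r.castSucc → s ≤ I r)
    (v : Fin n → ℝ) (hvmono : Antitone v) :
    ∑ r : Fin N, (wbar r.castSucc - wbar r.succ) * ((((I r : ℕ) : ℝ) + 1) * v (I r)) ≤
      ∑ s, w s * v s := by
  set c : Fin N → ℝ := fun r => wbar r.castSucc - wbar r.succ
  have hw : ∀ s, w s = ∑ r with s ≤ I r, c r := by
    intro s
    obtain ⟨r₀, hr₀⟩ := hvals s
    have hfiber : ({r | s ≤ I r} : Finset (Fin N)) = Ici r₀ := by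
      ext r
      simp [le_iff_le_of_isGreatest_fiber hwmono (hbar.comp_strictMono Fin.strictMono_castSucc)
        hI hr₀ r]
    rw [hfiber, Fin.sum_Ici_castSucc_sub_succ, hlast, sub_zero, hr₀]
  calc ∑ r, c r * ((((I r : ℕ) : ℝ) + 1) * v (I r))
      ≤ ∑ r, c r * ∑ s ∈ Iic (I r), v s :=
        sum_le_sum fun r _ => mul_le_mul_of_nonneg_left (hvmono.natCast_add_one_mul_le_sum_Iic _)
          (sub_nonneg.2 (hbar.antitone r.castSucc_le_succ))
    _ = ∑ s, (∑ r with s ≤ I r, c r) * v s := sum_mul_sum_Iic c I v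
    _ = ∑ s, w s * v s := by simp_rw [← hw]

/-- Lower bound on the ordered service cost in terms of the guessed thresholds:
with `w` non-increasing and nonnegative with distinct values `w̄_0 > … > w̄_{N-1}`
(extended by `w̄_N = 0`), `I r` the largest index attaining value `w̄_r`, `v`
non-increasing and nonnegative, and thresholds `T_r = v (I r)`, one has
`w · v ≥ Σ_r (w̄_r − w̄_{r+1}) · I_r · T_r` (here `I_r` is the one-based count,
i.e. `(I r) + 1`). -/
theorem stmt8 (n N : ℕ) (w : Fin n → ℝ)
    (hw0 : ∀ s, 0 ≤ w s) (hwmono : Antitone w)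
    (wbar : Fin (N + 1) → ℝ) (hbar : StrictAnti wbar) (hlast : wbar (Fin.last N) = 0)
    (hvals : ∀ s : Fin n, ∃ r : Fin N, w s = wbar r.castSucc)
    (hvals' : ∀ r : Fin N, ∃ s : Fin n, w s = wbar r.castSucc)
    (I : Fin N → Fin n)
    (hI : ∀ r : Fin N, w (I r) = wbar r.castSucc ∧
      ∀ s : Fin n, w s = wbar r.castSucc → s ≤ I r)
    (v : Fin n → ℝ) (hv0 : ∀ s, 0 ≤ v s) (hvmono : Antitone v) :
    ∑ r : Fin N, (wbar r.castSucc - wbar r.succ) * ((((I r : ℕ) : ℝ) + 1) * v (I r)) ≤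
      ∑ s, w s * v s :=
  stmt8_general n N w hwmono wbar hbar hlast hvals I hI v hvmono
end

section
/- Let (X,d) be a metric space, F ⊆ X a finite set, j ∈ X, and R > 0. Let x : F → [0,1] satisfy Σ_{i∈F} x_i = 1, set d_av(j) = Σ_{i∈F} x_i · d(i,j), and let U = {i ∈ F : x_i > 0 and d(i,j) < R}. Let S be a random subset of F on a finite probability space such that: (i) almost surely S contains at most one element of U and, for each i ∈ U, Pr[i ∈ S] = x_i; and (ii) almost surely, on the event S ∩ U = ∅, S is nonempty and min_{i∈S} d(i,j) ≤ 5R. Then E[min_{i∈S} d(i,j)] ≤ 6·d_av(j). -/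
open Classical in
/-- The `6·d_av` bound of the TM-MFL rounding analysis: let `x` be a fractional
assignment of client `j` to facilities `F` with average cost `d_av`, and let
`U = {i ∈ F : x_i > 0, d(i,j) < R}` be the bundle of `j`.  If a random subset `S`
of `F` (on a finite probability space) almost surely contains at most one point
of `U`, hits each `i ∈ U` with probability exactly `x i`, and, whenever it misses
`U`, contains some facility within distance `5R` of `j`, then the expected
service distance `E[min_{i∈S} d(i,j)]` is at most `6·d_av`.  (The minimum is
expressed via `sInf` of the image of `S` under `d(·,j)`.) -/
theorem stmt11 {X : Type*} [MetricSpace X] (F : Finset X) (j : X) (R : ℝ) (hR : 0 < R)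
    (x : X → ℝ) (hx0 : ∀ i ∈ F, 0 ≤ x i) (hx1 : ∀ i ∈ F, x i ≤ 1)
    (hxsum : ∑ i ∈ F, x i = 1)
    (dav : ℝ) (hdav : dav = ∑ i ∈ F, x i * dist i j)
    (U : Finset X) (hU : U = F.filter fun i => 0 < x i ∧ dist i j < R)
    (Ω : Type) [Fintype Ω] (p : Ω → ℝ) (hp0 : ∀ ω, 0 ≤ p ω) (hp1 : ∑ ω, p ω = 1)
    (S : Ω → Finset X) (hSF : ∀ ω, p ω ≠ 0 → S ω ⊆ F)
    (hone : ∀ ω, p ω ≠ 0 → (S ω ∩ U).card ≤ 1)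
    (hmarg : ∀ i ∈ U, ∑ ω ∈ Finset.univ.filter (fun ω => i ∈ S ω), p ω = x i)
    (hfar : ∀ ω, p ω ≠ 0 → S ω ∩ U = ∅ → ∃ i ∈ S ω, dist i j ≤ 5 * R) :
    ∑ ω, p ω * sInf ((fun i => dist i j) '' ↑(S ω)) ≤ 6 * dav := by
  classical
  set m : Ω → ℝ := fun ω => sInf ((fun i => dist i j) '' ↑(S ω)) with hm
  have hm0 : ∀ ω, 0 ≤ m ω := by
    intro ω
    apply Real.sInf_nonneg
    rintro _ ⟨i, -, rfl⟩
    exact dist_nonneg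
  have hmle : ∀ ω, ∀ i ∈ S ω, m ω ≤ dist i j := by
    intro ω i hi
    exact csInf_le ((S ω).finite_toSet.image _).bddBelow ⟨i, by simpa using hi, rfl⟩
  set hit : Finset Ω := Finset.univ.filter (fun ω => (S ω ∩ U).Nonempty) with hhit
  have hUF : U ⊆ F := by
    rw [hU]; exact Finset.filter_subset _ _
  -- rewrite S ω ∩ U as a filter of U
  have hinter : ∀ ω, S ω ∩ U = U.filter (fun i => i ∈ S ω) := by
    intro ω; ext i; simp [Finset.mem_inter, Finset.mem_filter, and_comm]
  -- A = service cost inside U, C = outside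
  set A : ℝ := ∑ i ∈ U, x i * dist i j with hA
  set C : ℝ := ∑ i ∈ F \ U, x i * dist i j with hC
  have hAC : dav = A + C := by
    rw [hdav, hA, hC, ← Finset.sum_sdiff hUF]; ring
  have hA0 : 0 ≤ A := Finset.sum_nonneg fun i hi =>
    mul_nonneg (hx0 i (hUF hi)) dist_nonneg
  have hC0 : 0 ≤ C := Finset.sum_nonneg fun i hi =>
    mul_nonneg (hx0 i (Finset.mem_sdiff.mp hi).1) dist_nonneg
  -- hit sum bound
  have hhitsum : ∑ ω ∈ hit, p ω * m ω ≤ A := by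
    have h1 : ∀ ω ∈ hit, p ω * m ω ≤ ∑ i ∈ S ω ∩ U, p ω * dist i j := by
      intro ω hω
      rw [hhit, Finset.mem_filter] at hω
      obtain ⟨i, hi⟩ := hω.2
      have hiS : i ∈ S ω := (Finset.mem_inter.mp hi).1
      refine le_trans ?_ (Finset.single_le_sum (f := fun i => p ω * dist i j)
        (fun k _ => mul_nonneg (hp0 ω) dist_nonneg) hi)
      exact mul_le_mul_of_nonneg_left (hmle ω i hiS) (hp0 ω)
    calc ∑ ω ∈ hit, p ω * m ω ≤ ∑ ω ∈ hit, ∑ i ∈ S ω ∩ U, p ω * dist i j :=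
          Finset.sum_le_sum h1
      _ ≤ ∑ ω, ∑ i ∈ S ω ∩ U, p ω * dist i j := by
          apply Finset.sum_le_sum_of_subset_of_nonneg (Finset.subset_univ _)
          intro ω _ _
          exact Finset.sum_nonneg fun i _ => mul_nonneg (hp0 ω) dist_nonneg
      _ = ∑ ω, ∑ i ∈ U, if i ∈ S ω then p ω * dist i j else 0 := by
          refine Finset.sum_congr rfl fun ω _ => ?_
          rw [hinter ω, Finset.sum_filter]
      _ = ∑ i ∈ U, ∑ ω, if i ∈ S ω then p ω * dist i j else 0 := Finset.sum_comm
      _ = ∑ i ∈ U, x i * dist i j := by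
          refine Finset.sum_congr rfl fun i hi => ?_
          rw [← Finset.sum_filter, ← Finset.sum_mul, hmarg i hi]
  -- mass of U is at most probability of hit
  have hmass : ∑ i ∈ U, x i ≤ ∑ ω ∈ hit, p ω := by
    calc ∑ i ∈ U, x i = ∑ i ∈ U, ∑ ω, if i ∈ S ω then p ω else 0 := by
          refine Finset.sum_congr rfl fun i hi => ?_
          rw [← Finset.sum_filter, hmarg i hi]
      _ = ∑ ω, ∑ i ∈ U, if i ∈ S ω then p ω else 0 := Finset.sum_comm
      _ = ∑ ω, p ω * (S ω ∩ U).card := by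
          refine Finset.sum_congr rfl fun ω _ => ?_
          rw [hinter ω, ← Finset.sum_filter, Finset.sum_const, nsmul_eq_mul, mul_comm]
      _ ≤ ∑ ω, if ω ∈ hit then p ω else 0 := by
          refine Finset.sum_le_sum fun ω _ => ?_
          by_cases hp : p ω = 0
          · simp [hp]
          by_cases hω : (S ω ∩ U).Nonempty
          · simp only [hhit, Finset.mem_filter, Finset.mem_univ, true_and, if_pos hω]
            have := hone ω hp
            calc p ω * (S ω ∩ U).card ≤ p ω * 1 := by
                  apply mul_le_mul_of_nonneg_left _ (hp0 ω)
                  exact_mod_cast this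
              _ = p ω := mul_one _
          · simp only [hhit, Finset.mem_filter, Finset.mem_univ, true_and, if_neg hω]
            rw [Finset.not_nonempty_iff_eq_empty.mp hω]
            simp
      _ = ∑ ω ∈ hit, p ω := by rw [Finset.sum_ite_mem, Finset.univ_inter]
  -- miss probability
  set q : ℝ := ∑ ω ∈ Finset.univ \ hit, p ω with hq
  have hq0 : 0 ≤ q := Finset.sum_nonneg fun ω _ => hp0 ω
  have hsplit : ∑ ω ∈ hit, p ω + q = 1 := by
    rw [hq, ← hp1]
    rw [← Finset.sum_sdiff (Finset.subset_univ hit)]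
    ring
  have hqle : q ≤ ∑ i ∈ F \ U, x i := by
    have h2 : ∑ i ∈ U, x i + ∑ i ∈ F \ U, x i = 1 := by
      rw [← hxsum, ← Finset.sum_sdiff hUF]; ring
    linarith
  have hRq : R * q ≤ C := by
    have h3 : ∀ i ∈ F \ U, R * x i ≤ x i * dist i j := by
      intro i hi
      obtain ⟨hiF, hiU⟩ := Finset.mem_sdiff.mp hi
      rcases (hx0 i hiF).eq_or_lt with h | h
      · rw [← h]; simp
      · have hd : R ≤ dist i j := by
          by_contra hd
          exact hiU (by rw [hU]; exact Finset.mem_filter.mpr ⟨hiF, h, lt_of_not_ge hd⟩)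
        calc R * x i = x i * R := mul_comm _ _
          _ ≤ x i * dist i j := mul_le_mul_of_nonneg_left hd h.le
    calc R * q ≤ R * ∑ i ∈ F \ U, x i := mul_le_mul_of_nonneg_left hqle hR.le
      _ = ∑ i ∈ F \ U, R * x i := Finset.mul_sum _ _ _
      _ ≤ C := Finset.sum_le_sum h3
  -- miss sum bound
  have hmisssum : ∑ ω ∈ Finset.univ \ hit, p ω * m ω ≤ 5 * R * q := by
    rw [hq, Finset.mul_sum]
    refine Finset.sum_le_sum fun ω hω => ?_
    by_cases hp : p ω = 0
    · simp [hp]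
    · have hωmiss : S ω ∩ U = ∅ := by
        rw [Finset.mem_sdiff, hhit, Finset.mem_filter] at hω
        exact Finset.not_nonempty_iff_eq_empty.mp fun h => hω.2 ⟨Finset.mem_univ _, h⟩
      obtain ⟨i, hiS, hid⟩ := hfar ω hp hωmiss
      calc p ω * m ω ≤ p ω * dist i j := mul_le_mul_of_nonneg_left (hmle ω i hiS) (hp0 ω)
        _ ≤ p ω * (5 * R) := mul_le_mul_of_nonneg_left hid (hp0 ω)
        _ = 5 * R * p ω := by ring
  -- combine
  have htotal : ∑ ω, p ω * m ω = ∑ ω ∈ hit, p ω * m ω + ∑ ω ∈ Finset.univ \ hit, p ω * m ω := by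
    rw [← Finset.sum_sdiff (Finset.subset_univ hit)]; ring
  rw [show (∑ ω, p ω * sInf ((fun i => dist i j) '' ↑(S ω))) = ∑ ω, p ω * m ω from rfl]
  rw [htotal, hAC]
  nlinarith [hRq, hA0, hC0, hhitsum, hmisssum, hq0, hR.le]
end
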